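/- Let Γ be a finite tree, let A be a vertex of Γ of degree n with incident edges e_1,…,e_n, and for each i let Γ_{e_i} be the branch at e_i, i.e., the maximal subtree of Γ containing A and the edge e_i but none of the edges e_j for j ≠ i. Let (t_e)_{e∈E(Γ)} be positive edge weights. Then there exists a constant C such that for all real T ≥ 0, B(Γ, A, T) = Σ_{∅ ≠ G ⊆ E(Γ)} c_G · W((2t_e)_{e∈G}; T) + C, where for a nonempty subset G meeting exactly the branches Γ_{e_{i_1}},…,Γ_{e_{i_k}} one has c_G := (Π_{j=1}^{k} z(Γ_{e_{i_j}}, G ∩ E(Γ_{e_{i_j}}), A)) · Σ_{j=0}^{n−k−1} (n−k−j) · σ_j((z_i)_{i ∉ {i_1,…,i_k}}), with z_i := z(Γ_{e_i}, ∅, A) and σ_j the j-th elementary symmetric polynomial of the listed n−k values (when k = n the empty sum makes c_G = 0). -/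

import Mathlib

open SimpleGraph

/-- `F` is the edge set of a rooted subtree (a connected subgraph containing the root `A`,
determined by its edge set) of the graph `G`. -/
def IsRootedSubtree {V : Type*} (G : SimpleGraph V) (A : V) (F : Set (Sym2 V)) : Prop :=
  F ⊆ G.edgeSet ∧ ∀ v : V, (∃ e ∈ F, v ∈ e) → (SimpleGraph.fromEdgeSet F).Reachable A v

-- `z(G, Gs, A) = (-1)^{|Gs|} Σ_{Γ'} (-1)^{|E(Γ')|}`, the sum running over all rooted subtrees
-- `Γ'` of `G` (root `A`) with nonempty edge set containing `Gs`.
open scoped Classical in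
noncomputable def zrel {V : Type*} [Fintype V] [DecidableEq V]
    (G : SimpleGraph V) (A : V) (Gs : Finset (Sym2 V)) : ℤ :=
  (-1 : ℤ) ^ Gs.card *
    ∑ F : Finset (Sym2 V),
      if F.Nonempty ∧ Gs ⊆ F ∧ IsRootedSubtree G A ↑F then (-1 : ℤ) ^ F.card else 0

/-- `W((2 t_e)_{e ∈ F}; T)`: the number of tuples of nonnegative integers `(n_e)_{e ∈ F}`
with `∑_{e ∈ F} n_e · (2 t_e) ≤ T`. -/
noncomputable def Wfin {V : Type*} (F : Finset (Sym2 V)) (t : Sym2 V → ℝ) (T : ℝ) : ℕ :=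
  Nat.card {n : Sym2 V → ℕ |
    (∀ e ∉ F, n e = 0) ∧ ∑ e ∈ F, (n e : ℝ) * (2 * t e) ≤ T}

-- `B(G, A, T)`: the sum, over all pairs `(Γ', n)` where `Γ'` is a rooted subtree (root `A`)
-- with nonempty edge set `F` and `n` assigns a positive integer to every edge of `Γ'` with
-- `∑_{e ∈ F} 2 n_e t_e ≤ T`, of the weight `deg A - r(Γ')`, where `r(Γ')` is the number of
-- edges of `Γ'` incident to `A`.
open scoped Classical in
noncomputable def Bcount {V : Type*} [Fintype V] [DecidableEq V]
    (G : SimpleGraph V) (A : V) (t : Sym2 V → ℝ) (T : ℝ) : ℤ :=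
  ∑ F : Finset (Sym2 V),
    if IsRootedSubtree G A ↑F ∧ F.Nonempty then
      ((Nat.card {w : V | G.Adj A w} : ℤ) - ((F.filter (fun e => A ∈ e)).card : ℤ)) *
        (Nat.card {n : Sym2 V → ℕ |
          (∀ e ∈ F, 1 ≤ n e) ∧ (∀ e ∉ F, n e = 0) ∧
          ∑ e ∈ F, (n e : ℝ) * (2 * t e) ≤ T} : ℤ)
    else 0

-- The coefficient `c_F` of Theorem 1: if the nonempty edge set `F` meets exactly the branches
-- `Γ i` for `i ∈ I`, `|I| = k`, then
-- `c_F = (Π_{i ∈ I} z(Γ i, F ∩ E(Γ i), A)) · Σ_{j=0}^{n-k-1} (n - k - j) σ_j((z_i)_{i ∉ I})`,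
-- where `z_i = z(Γ i, ∅, A)` and `σ_j` is the `j`-th elementary symmetric polynomial.
open scoped Classical in
noncomputable def cCoef {V : Type*} [Fintype V] [DecidableEq V]
    (n : ℕ) (Γ : Fin n → SimpleGraph V) (A : V) (F : Finset (Sym2 V)) : ℤ :=
  let I : Finset (Fin n) := Finset.univ.filter fun i => ∃ e ∈ F, e ∈ (Γ i).edgeSet
  (∏ i ∈ I, zrel (Γ i) A (F.filter fun e => e ∈ (Γ i).edgeSet)) *
    ∑ j ∈ Finset.range (n - I.card),
      ((n : ℤ) - (I.card : ℤ) - (j : ℤ)) *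
        ∑ S ∈ Iᶜ.powersetCard j, ∏ i ∈ S, zrel (Γ i) A ∅

/-!
Sort the pairs counted by `Bcount` by the rooted subtree `X` that carries the positive tuple:
`B(T) = ∑_X w(X) P(X, T)` with `w(X) = deg A - r(X)` and `P(X, T)` the number of positive tuples
on `X`. A nonnegative tuple on `F` is a positive tuple on its support, so
`W(F, T) = ∑_{X ⊆ F} P(X, T)`, and Möbius inversion on the Boolean lattice turns this into
`B(T) = ∑_F D(F) W(F, T)` with `D(F) = ∑_{X ⊇ F} (-1)^{|X|+|F|} w(X)` (`mobiusRootWeight`).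
Since `W(∅, T) = 1`, the term `F = ∅` is the constant `C`.

For `F ≠ ∅` the tree structure does the rest: a rooted subtree of `Γ` is the same as a choice of a
possibly empty rooted subtree in every branch, and `deg A - r(X)` is the number of branches that
`X` misses. Hence `D(F)` factors over the branches: a branch met by `F` contributes
`± z(Γ_i, F ∩ E(Γ_i), A)`, any other branch `1 + z_i`, except the one that `X` is required to miss,
which contributes `1`. Expanding `∑_{i ∉ I} ∏_{j ∉ I, j ≠ i} (1 + z_j)` in elementary symmetric
polynomials gives `c_F`.
-/

open Finset

namespace Finset

section Boolean

variable {α : Type*} [DecidableEq α]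

theorem sum_Icc_neg_one_pow_card (X Z : Finset α) :
    ∑ Y ∈ Icc X Z, (-1 : ℤ) ^ #Y = if X = Z then (-1) ^ #X else 0 := by
  by_cases hXZ : X ⊆ Z
  · have hinj : Set.InjOn (X ∪ ·) ↑(Z \ X).powerset := fun S hS S' hS' h => by
      simp only [coe_powerset, Set.mem_preimage, Set.mem_powerset_iff, coe_subset] at hS hS'
      calc S = (X ∪ S) \ X := (union_sdiff_cancel_left (disjoint_sdiff.mono_right hS)).symm
        _ = (X ∪ S') \ X := congrArg (· \ X) h
        _ = S' := union_sdiff_cancel_left (disjoint_sdiff.mono_right hS')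
    rw [Icc_eq_image_powerset hXZ, sum_image hinj]
    have hsign : ∀ S ∈ (Z \ X).powerset, (-1 : ℤ) ^ #(X ∪ S) = (-1) ^ #X * (-1) ^ #S :=
      fun S hS => by
        rw [card_union_of_disjoint (disjoint_sdiff.mono_right (mem_powerset.mp hS)), pow_add]
    rw [sum_congr rfl hsign, ← mul_sum, sum_powerset_neg_one_pow_card]
    simp only [sdiff_eq_empty_iff_subset, subset_antisymm_iff (a := X), hXZ, true_and, mul_ite,
      mul_one, mul_zero]
  · rw [Icc_eq_empty (fun h => hXZ h), sum_empty, if_neg (by rintro rfl; exact hXZ le_rfl)]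

/-- Möbius inversion on the Boolean lattice of subsets of `X`. -/
theorem sum_powerset_neg_one_pow_mul_sum_powerset (f : Finset α → ℤ) (X : Finset α) :
    ∑ F ∈ X.powerset, (-1) ^ (#X + #F) * ∑ Y ∈ F.powerset, f Y = f X := by
  simp_rw [mul_sum]
  rw [sum_comm' (t' := X.powerset) (s' := fun Y => Icc Y X) (fun F Y => by
    simp only [mem_powerset, mem_Icc]
    exact ⟨fun h => ⟨⟨h.2, h.1⟩, h.2.trans h.1⟩, fun h => ⟨h.1.2, h.1.1⟩⟩)]
  have hinner : ∀ Y ∈ X.powerset, ∑ F ∈ Icc Y X, (-1 : ℤ) ^ (#X + #F) * f Y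
      = if Y = X then f X else 0 := fun Y _ => by
    simp_rw [← sum_mul, pow_add, ← mul_sum, sum_Icc_neg_one_pow_card]
    split_ifs with h
    · subst h; rw [← pow_add, Even.neg_one_pow ⟨_, rfl⟩, one_mul]
    · simp
  rw [sum_congr rfl hinner, sum_ite_eq' _ _ _, if_pos (mem_powerset_self X)]

end Boolean

section Partition

variable {ι α : Type*} (p : ι → α → Prop) [∀ i, DecidablePred (p i)]

theorem subset_iff_forall_filter_subset {F X : Finset α} (hF : ∀ a ∈ F, ∃ i, p i a) :
    F ⊆ X ↔ ∀ i, F.filter (p i) ⊆ X.filter (p i) :=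
  ⟨fun h i => filter_subset_filter (p i) h, fun h a ha => by
    obtain ⟨i, hi⟩ := hF a ha
    exact filter_subset _ _ (h i (mem_filter.mpr ⟨ha, hi⟩))⟩

variable [Fintype ι]

theorem sum_card_filter_eq_card (hp : ∀ a i j, p i a → p j a → i = j) {X : Finset α}
    (hX : ∀ a ∈ X, ∃ i, p i a) : ∑ i, #(X.filter (p i)) = #X := by
  simp_rw [card_filter]
  rw [sum_comm, card_eq_sum_ones]
  refine sum_congr rfl fun a ha => ?_
  obtain ⟨i, hi⟩ := hX a ha
  rw [sum_eq_single i (fun j _ hji => if_neg fun hj => hji (hp a j i hj hi)) (by simp),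
    if_pos hi]

variable {R : Type*} [CommSemiring R] [DecidableEq ι] [DecidableEq α]

/-- Subsets of `s` correspond to families of subsets of the blocks of the partition of `s`
cut out by `p`. -/
theorem sum_powerset_prod_filter (hp : ∀ a i j, p i a → p j a → i = j) {s : Finset α}
    (hs : ∀ a ∈ s, ∃ i, p i a) (f : ι → Finset α → R) :
    ∑ X ∈ s.powerset, ∏ i, f i (X.filter (p i)) =
      ∏ i, ∑ Y ∈ (s.filter (p i)).powerset, f i Y := by
  rw [prod_univ_sum]
  refine sum_nbij' (fun X i => X.filter (p i)) (fun Y => univ.biUnion Y) (fun X hX => ?_)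
    (fun Y hY => ?_) (fun X hX => ?_) (fun Y hY => ?_) (fun _ _ => rfl)
  · simpa [Fintype.mem_piFinset] using fun i => filter_subset_filter (p i) (mem_powerset.mp hX)
  · simp only [Fintype.mem_piFinset, mem_powerset] at hY
    simpa using fun i => (hY i).trans (filter_subset _ _)
  · ext a
    simp only [mem_biUnion, mem_univ, mem_filter, true_and]
    exact ⟨fun ⟨_, ha, _⟩ => ha,
      fun ha => (hs a (mem_powerset.mp hX ha)).imp fun i hi => ⟨ha, hi⟩⟩
  · simp only [Fintype.mem_piFinset, mem_powerset] at hY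
    funext i
    ext a
    simp only [mem_filter, mem_biUnion, mem_univ, true_and]
    refine ⟨fun ⟨⟨j, ha⟩, hai⟩ => ?_, fun ha => ⟨⟨i, ha⟩, (mem_filter.mp (hY i ha)).2⟩⟩
    rwa [hp a i j hai (mem_filter.mp (hY j ha)).2]

/-- Weighting each subset by the number of blocks it misses amounts to replacing, for one block
at a time, the free choice on that block by the empty set. -/
theorem sum_powerset_card_filter_eq_empty_mul_prod (hp : ∀ a i j, p i a → p j a → i = j)
    {s : Finset α} (hs : ∀ a ∈ s, ∃ i, p i a) (f : ι → Finset α → R) :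
    ∑ X ∈ s.powerset, (#{i | X.filter (p i) = ∅} : R) * ∏ i, f i (X.filter (p i)) =
      ∑ i, f i ∅ * ∏ j ∈ univ.erase i, ∑ Y ∈ (s.filter (p j)).powerset, f j Y := by
  set g : ι → ι → Finset α → R := fun i j Y => if j = i ∧ Y ≠ ∅ then 0 else f j Y
  have hsplit : ∀ X : Finset α, (#{i | X.filter (p i) = ∅} : R) * ∏ i, f i (X.filter (p i)) =
      ∑ i, ∏ j, g i j (X.filter (p j)) := by
    intro X
    rw [natCast_card_filter, sum_mul]
    refine sum_congr rfl fun i _ => ?_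
    split_ifs with hXi
    · exact (one_mul _).trans
        (prod_congr rfl fun j _ => (if_neg (by rintro ⟨rfl, h⟩; exact h hXi)).symm)
    · exact (zero_mul _).trans (prod_eq_zero (f := fun j => g i j (X.filter (p j)))
        (mem_univ i) (if_pos ⟨rfl, hXi⟩)).symm
  simp_rw [hsplit]
  rw [sum_comm]
  refine sum_congr rfl fun i _ => ?_
  rw [sum_powerset_prod_filter p hp hs (g i), ← mul_prod_erase _ _ (mem_univ i)]
  congr 1
  · rw [sum_eq_single_of_mem ∅ (empty_mem_powerset _) fun Y _ hY => if_pos ⟨rfl, hY⟩]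
    exact if_neg fun h => h.2 rfl
  · exact prod_congr rfl fun j hj =>
      sum_congr rfl fun Y _ => if_neg fun h => ne_of_mem_erase hj h.1

end Partition

theorem prod_univ_erase_eq_prod_mul_prod_compl_erase {ι M : Type*} [Fintype ι] [DecidableEq ι]
    [CommMonoid M] (f : ι → M) {I : Finset ι} {i : ι} (hi : i ∉ I) :
    ∏ j ∈ univ.erase i, f j = (∏ j ∈ I, f j) * ∏ j ∈ Iᶜ.erase i, f j := by
  have hsplit : univ.erase i = I ∪ Iᶜ.erase i := by
    ext j
    simp only [mem_erase, mem_univ, and_true, mem_union, mem_compl]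
    by_cases hj : j ∈ I
    · exact iff_of_true (by rintro rfl; exact hi hj) (Or.inl hj)
    · simp [hj]
  rw [hsplit, prod_union (disjoint_compl_right.mono_right (erase_subset _ _))]

theorem sum_prod_erase_one_add {ι R : Type*} [DecidableEq ι] [CommRing R] (S : Finset ι)
    (z : ι → R) :
    ∑ i ∈ S, ∏ j ∈ S.erase i, (1 + z j) =
      ∑ k ∈ range #S, (#S - k : R) * ∑ T ∈ S.powersetCard k, ∏ j ∈ T, z j := by
  have hlhs : ∑ i ∈ S, ∏ j ∈ S.erase i, (1 + z j) =
      ∑ T ∈ S.powerset, (#S - #T : R) * ∏ j ∈ T, z j := by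
    simp_rw [prod_one_add]
    rw [sum_comm' (t' := S.powerset) (s' := fun T => S \ T) (fun i T => by
      simp only [mem_powerset, mem_sdiff, subset_erase]; tauto)]
    refine sum_congr rfl fun T hT => ?_
    rw [sum_const, card_sdiff_of_subset (mem_powerset.mp hT), nsmul_eq_mul,
      Nat.cast_sub (card_le_card (mem_powerset.mp hT))]
  rw [hlhs, ← sum_fiberwise_of_maps_to (g := card) (t := range (#S + 1))
    fun T hT => mem_range_succ_iff.mpr (card_le_card (mem_powerset.mp hT)), sum_range_succ]
  simp_rw [← powersetCard_eq_filter]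
  rw [sum_eq_zero (s := powersetCard #S S) fun T hT => by
    rw [(mem_powersetCard.mp hT).2, sub_self, zero_mul], add_zero]
  refine sum_congr rfl fun k _ => ?_
  rw [mul_sum]
  exact sum_congr rfl fun T hT => by rw [(mem_powersetCard.mp hT).2]

end Finset

section Tuples

variable {α : Type*}

def nonnegTuples (F : Finset α) (t : α → ℝ) (T : ℝ) : Set (α → ℕ) :=
  {n | (∀ e ∉ F, n e = 0) ∧ ∑ e ∈ F, (n e : ℝ) * (2 * t e) ≤ T}

def posTuples (F : Finset α) (t : α → ℝ) (T : ℝ) : Set (α → ℕ) :=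
  {n | (∀ e ∈ F, 1 ≤ n e) ∧ (∀ e ∉ F, n e = 0) ∧ ∑ e ∈ F, (n e : ℝ) * (2 * t e) ≤ T}

theorem finite_nonnegTuples [Fintype α] [DecidableEq α] {F : Finset α} {t : α → ℝ}
    (ht : ∀ e ∈ F, 0 < t e) (T : ℝ) :
    (nonnegTuples F t T).Finite := by
  refine (Set.finite_Iic fun e => ⌊T / (2 * t e)⌋₊).subset fun n ⟨hsupp, hsum⟩ e => ?_
  by_cases he : e ∈ F
  · have hte : 0 < 2 * t e := by linarith [ht e he]
    have hle : (n e : ℝ) * (2 * t e) ≤ T := (single_le_sum (fun e' he' => by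
      have := ht e' he'; positivity) he).trans hsum
    exact Nat.le_floor ((le_div_iff₀ hte).mpr hle)
  · simp [hsupp e he]

theorem posTuples_eq_sep [DecidableEq α] {F X : Finset α} (hX : X ⊆ F) (t : α → ℝ) (T : ℝ) :
    posTuples X t T = {n ∈ nonnegTuples F t T | F.filter (n · ≠ 0) = X} := by
  ext n
  have hsum : (∀ e ∉ X, n e = 0) →
      ∑ e ∈ X, (n e : ℝ) * (2 * t e) = ∑ e ∈ F, (n e : ℝ) * (2 * t e) := fun h =>
    sum_subset hX fun e _ he => by simp [h e he]
  simp only [posTuples, nonnegTuples, Set.mem_ofPred_eq, Finset.ext_iff, mem_filter,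
    Nat.one_le_iff_ne_zero]
  constructor
  · rintro ⟨hpos, hzero, hle⟩
    exact ⟨⟨fun e he => hzero e (mt (@hX e) he), hsum hzero ▸ hle⟩,
      fun e => ⟨fun h => by_contra fun he => h.2 (hzero e he), fun he => ⟨hX he, hpos e he⟩⟩⟩
  · rintro ⟨⟨hzero, hle⟩, hsupp⟩
    have hzeroX : ∀ e ∉ X, n e = 0 := fun e he => by
      by_contra h
      by_cases heF : e ∈ F
      · exact he ((hsupp e).mp ⟨heF, h⟩)
      · exact h (hzero e heF)
    exact ⟨fun e he => ((hsupp e).mpr he).2, hzeroX, (hsum hzeroX).symm ▸ hle⟩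

theorem card_nonnegTuples_eq_sum [Fintype α] [DecidableEq α] {F : Finset α} {t : α → ℝ}
    (ht : ∀ e ∈ F, 0 < t e) (T : ℝ) :
    Nat.card (nonnegTuples F t T) = ∑ X ∈ F.powerset, Nat.card (posTuples X t T) := by
  have hfin := finite_nonnegTuples ht T
  rw [Nat.card_eq_card_finite_toFinset hfin]
  have hmaps : ∀ n ∈ hfin.toFinset, F.filter (n · ≠ 0) ∈ F.powerset :=
    fun n _ => mem_powerset.mpr (filter_subset _ _)
  rw [card_eq_sum_card_fiberwise hmaps]
  refine sum_congr rfl fun X hX => ?_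
  rw [posTuples_eq_sep (mem_powerset.mp hX), ← Nat.card_eq_finsetCard]
  exact Nat.card_congr (Equiv.subtypeEquivRight fun n => by simp)

theorem nonnegTuples_empty {t : α → ℝ} {T : ℝ} (hT : 0 ≤ T) : nonnegTuples ∅ t T = {0} := by
  ext n
  simp [nonnegTuples, hT, funext_iff]

theorem card_posTuples_eq_sum [Fintype α] [DecidableEq α] {X : Finset α} {t : α → ℝ}
    (ht : ∀ e ∈ X, 0 < t e) (T : ℝ) :
    (Nat.card (posTuples X t T) : ℤ) =
      ∑ F ∈ X.powerset, (-1) ^ (#X + #F) * (Nat.card (nonnegTuples F t T) : ℤ) := by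
  rw [← sum_powerset_neg_one_pow_mul_sum_powerset (fun Y => (Nat.card (posTuples Y t T) : ℤ))]
  refine sum_congr rfl fun F hF => ?_
  rw [card_nonnegTuples_eq_sum (fun e he => ht e (mem_powerset.mp hF he)), Nat.cast_sum]

theorem Wfin_eq_card_nonnegTuples {V : Type*} (F : Finset (Sym2 V)) (t : Sym2 V → ℝ) (T : ℝ) :
    Wfin F t T = Nat.card (nonnegTuples F t T) :=
  rfl

end Tuples

section RootedSubtree

variable {V : Type*} {G H : SimpleGraph V} {A : V}

theorem isRootedSubtree_empty (G : SimpleGraph V) (A : V) : IsRootedSubtree G A ∅ :=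
  ⟨Set.empty_subset _, fun _ ⟨_, he, _⟩ => he.elim⟩

theorem SimpleGraph.mem_support_of_mem_edgeSet {e : Sym2 V} {x : V} (he : e ∈ G.edgeSet)
    (hx : x ∈ e) : x ∈ G.support := by
  induction e using Sym2.ind with
  | h a b =>
    rcases Sym2.mem_iff.mp hx with rfl | rfl
    · exact (G.mem_edgeSet.mp he).left_mem_support
    · exact (G.mem_edgeSet.mp he).right_mem_support

theorem SimpleGraph.Walk.mem_of_mem_edges_fromEdgeSet {F : Set (Sym2 V)} {u w : V}
    (p : (fromEdgeSet F).Walk u w) {e : Sym2 V} (he : e ∈ p.edges) : e ∈ F := by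
  have := p.edges_subset_edgeSet he
  rw [edgeSet_fromEdgeSet] at this
  exact this.1

/-- In an acyclic graph the path from the root to a vertex of `H` is unique, so it runs inside
`H`. -/
theorem IsRootedSubtree.inter_edgeSet {F : Set (Sym2 V)} (hF : IsRootedSubtree G A F)
    (hG : G.IsAcyclic) (hHG : H ≤ G) (hH : ∀ w ∈ H.support, H.Reachable A w) :
    IsRootedSubtree H A (F ∩ H.edgeSet) := by
  classical
  refine ⟨Set.inter_subset_right, fun x ⟨e, ⟨heF, heH⟩, hxe⟩ => ?_⟩
  obtain ⟨p, hp⟩ := (hF.2 x ⟨e, heF, hxe⟩).some.toPath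
  obtain ⟨q, hq⟩ := (hH x (mem_support_of_mem_edgeSet heH hxe)).some.toPath
  have hpG : ∀ e ∈ p.edges, e ∈ G.edgeSet := fun e he =>
    hF.1 (p.mem_of_mem_edges_fromEdgeSet he)
  have hqG : ∀ e ∈ q.edges, e ∈ G.edgeSet := fun e he =>
    edgeSet_mono hHG (q.edges_subset_edgeSet he)
  have hpq : p.edges = q.edges := by
    simpa using congrArg (fun r : G.Path A x => r.1.edges)
      ((hG.subsingleton_path A x).elim ⟨_, hp.transfer hpG⟩ ⟨_, hq.transfer hqG⟩)
  refine ⟨p.transfer _ fun e he => ?_⟩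
  have hpe := p.edges_subset_edgeSet he
  rw [edgeSet_fromEdgeSet] at hpe ⊢
  exact ⟨⟨hpe.1, q.edges_subset_edgeSet (hpq ▸ he)⟩, hpe.2⟩

theorem isRootedSubtree_of_forall_inter {ι : Type*} {Γ : ι → SimpleGraph V} {F : Set (Sym2 V)}
    (hFG : F ⊆ G.edgeSet) (hFΓ : ∀ e ∈ F, ∃ i, e ∈ (Γ i).edgeSet)
    (h : ∀ i, IsRootedSubtree (Γ i) A (F ∩ (Γ i).edgeSet)) : IsRootedSubtree G A F :=
  ⟨hFG, fun x ⟨e, heF, hxe⟩ => by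
    obtain ⟨i, hi⟩ := hFΓ e heF
    exact ((h i).2 x ⟨e, ⟨heF, hi⟩, hxe⟩).mono (fromEdgeSet_mono Set.inter_subset_left)⟩

theorem IsRootedSubtree.exists_root_mem {F : Set (Sym2 V)} (hF : IsRootedSubtree G A F)
    (hne : F.Nonempty) : ∃ e ∈ F, A ∈ e := by
  obtain ⟨e, he⟩ := hne
  induction e using Sym2.ind with
  | h a b =>
    obtain ⟨p⟩ := hF.2 a ⟨s(a, b), he, Sym2.mem_mk_left a b⟩
    cases p with
    | nil => exact ⟨s(A, b), he, Sym2.mem_mk_left A b⟩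
    | cons h _ => exact ⟨_, (fromEdgeSet_adj _).mp h |>.1, Sym2.mem_mk_left _ _⟩

end RootedSubtree

open scoped Classical

section Weights

variable {V : Type*} [DecidableEq V]

noncomputable def rootedSign (G : SimpleGraph V) (A : V) (Fs X : Finset (Sym2 V)) : ℤ :=
  if IsRootedSubtree G A ↑X ∧ Fs ⊆ X then (-1) ^ #X else 0

noncomputable def rootWeight (G : SimpleGraph V) (A : V) (X : Finset (Sym2 V)) : ℤ :=
  if IsRootedSubtree G A ↑X ∧ X.Nonempty then
    (Nat.card {w : V | G.Adj A w} : ℤ) - #(X.filter (A ∈ ·))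
  else 0

variable [Fintype V]

theorem sum_rootedSign (G : SimpleGraph V) (A : V) (Fs : Finset (Sym2 V)) :
    ∑ X, rootedSign G A Fs X = (-1) ^ #Fs * zrel G A Fs + if Fs = ∅ then 1 else 0 := by
  have hsplit : ∀ X, rootedSign G A Fs X =
      (if X.Nonempty ∧ Fs ⊆ X ∧ IsRootedSubtree G A ↑X then (-1 : ℤ) ^ #X else 0) +
        if X = ∅ then (if Fs = ∅ then 1 else 0) else 0 := by
    intro X
    rcases X.eq_empty_or_nonempty with rfl | hX
    · simp [rootedSign, isRootedSubtree_empty]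
    · simp [rootedSign, hX, hX.ne_empty, and_comm]
  rw [zrel, ← mul_assoc, ← pow_add, Even.neg_one_pow ⟨_, rfl⟩, one_mul,
    sum_congr rfl fun X _ => hsplit X, sum_add_distrib, sum_ite_eq', if_pos (mem_univ _)]

noncomputable def mobiusRootWeight (G : SimpleGraph V) (A : V) (F : Finset (Sym2 V)) : ℤ :=
  ∑ X, if F ⊆ X then (-1) ^ (#X + #F) * rootWeight G A X else 0

theorem Bcount_eq_sum_mobiusRootWeight_mul_Wfin {G : SimpleGraph V} {A : V} {t : Sym2 V → ℝ}
    (ht : ∀ e ∈ G.edgeSet, 0 < t e) (T : ℝ) :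
    Bcount G A t T = ∑ F, mobiusRootWeight G A F * Wfin F t T := by
  calc Bcount G A t T = ∑ X, rootWeight G A X * Nat.card (posTuples X t T) :=
        sum_congr rfl fun X _ => by rw [rootWeight, ite_mul, zero_mul]; rfl
    _ = ∑ X, ∑ F : Finset (Sym2 V),
          if F ⊆ X then (-1) ^ (#X + #F) * rootWeight G A X * Wfin F t T else 0 := by
        refine sum_congr rfl fun X _ => ?_
        by_cases hX : IsRootedSubtree G A ↑X
        · rw [card_posTuples_eq_sum fun e he => ht e (hX.1 he), mul_sum, ← filter_subset_univ,
            sum_filter]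
          exact sum_congr rfl fun F _ => by
            split_ifs <;> simp only [Wfin_eq_card_nonnegTuples]; ring
        · simp [rootWeight, hX]
    _ = ∑ F : Finset (Sym2 V), mobiusRootWeight G A F * Wfin F t T := by
        rw [sum_comm]
        refine sum_congr rfl fun F _ => ?_
        rw [mobiusRootWeight, sum_mul]
        refine sum_congr rfl fun X _ => ?_
        rw [ite_mul, zero_mul, mul_assoc]

theorem mobiusRootWeight_eq_zero {G : SimpleGraph V} {A : V} {F : Finset (Sym2 V)}
    (hF : ¬ ↑F ⊆ G.edgeSet) :
    mobiusRootWeight G A F = 0 :=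
  sum_eq_zero fun X _ => by
    by_cases hX : IsRootedSubtree G A ↑X
    · rw [if_neg fun hFX => hF ((coe_subset.mpr hFX).trans hX.1)]
    · simp [rootWeight, hX]

/-- `mobiusRootWeight` factored over a family of branches `Γ`; the `i`-th term accounts for the
rooted subtrees that miss the branch `Γ i`. -/
noncomputable def branchSum {ι : Type*} [Fintype ι] [DecidableEq ι] (Γ : ι → SimpleGraph V)
    (A : V) (F : Finset (Sym2 V)) : ℤ :=
  (-1) ^ #F * ∑ i, (if F.filter (· ∈ (Γ i).edgeSet) = ∅ then 1 else 0) *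
    ∏ j ∈ univ.erase i, ∑ Y, rootedSign (Γ j) A (F.filter (· ∈ (Γ j).edgeSet)) Y

end Weights

section Branches

variable {V ι : Type*} {G : SimpleGraph V} {A : V} {v : ι → V} {Γ : ι → SimpleGraph V}

/-- `Γ i` is the branch of `G` at the root edge `s(A, v i)`. -/
structure IsBranchFamily (G : SimpleGraph V) (A : V) (v : ι → V) (Γ : ι → SimpleGraph V) :
    Prop where
  le : ∀ i, Γ i ≤ G
  adj_root_iff : ∀ i w, (Γ i).Adj A w ↔ w = v i
  edgeSet_inter_eq_empty : ∀ i j, i ≠ j → (Γ i).edgeSet ∩ (Γ j).edgeSet = ∅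
  exists_mem_edgeSet : ∀ e ∈ G.edgeSet, ∃ i, e ∈ (Γ i).edgeSet
  reachable : ∀ i, ∀ w ∈ (Γ i).support, (Γ i).Reachable A w

namespace IsBranchFamily

theorem eq_of_mem_edgeSet (hΓ : IsBranchFamily G A v Γ) (e : Sym2 V) (i j : ι)
    (hi : e ∈ (Γ i).edgeSet) (hj : e ∈ (Γ j).edgeSet) : i = j :=
  by_contra fun hij => (hΓ.edgeSet_inter_eq_empty i j hij).subset ⟨hi, hj⟩

theorem isRootedSubtree_iff (hΓ : IsBranchFamily G A v Γ) (hG : G.IsAcyclic)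
    {X : Finset (Sym2 V)} (hX : ↑X ⊆ G.edgeSet) :
    IsRootedSubtree G A ↑X ↔ ∀ i, IsRootedSubtree (Γ i) A ↑(X.filter (· ∈ (Γ i).edgeSet)) := by
  simp only [coe_filter]
  exact ⟨fun h i => h.inter_edgeSet hG (hΓ.le i) (hΓ.reachable i),
    isRootedSubtree_of_forall_inter hX fun e he => hΓ.exists_mem_edgeSet e (hX he)⟩

theorem sum_card_filter (hΓ : IsBranchFamily G A v Γ) [Fintype ι] {X : Finset (Sym2 V)}
    (hX : ↑X ⊆ G.edgeSet) : ∑ i, #(X.filter (· ∈ (Γ i).edgeSet)) = #X :=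
  sum_card_filter_eq_card _ hΓ.eq_of_mem_edgeSet fun e he => hΓ.exists_mem_edgeSet e (hX he)

/-- The edges of a rooted subtree at the root are the root edges of the branches it enters. -/
theorem card_filter_root_mem [DecidableEq V] [Fintype ι] (hΓ : IsBranchFamily G A v Γ)
    (hG : G.IsAcyclic) (hv : Function.Injective v) {X : Finset (Sym2 V)}
    (hX : IsRootedSubtree G A ↑X) :
    #(X.filter (A ∈ ·)) = #{i | (X.filter (· ∈ (Γ i).edgeSet)).Nonempty} := by
  have hroot : X.filter (A ∈ ·) =
      ({i | (X.filter (· ∈ (Γ i).edgeSet)).Nonempty} : Finset ι).image (s(A, v ·)) := by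
    ext e
    simp only [mem_filter, mem_image, mem_univ, true_and]
    constructor
    · rintro ⟨heX, hAe⟩
      obtain ⟨w, rfl⟩ := Sym2.mem_iff_exists.mp hAe
      obtain ⟨i, hi⟩ := hΓ.exists_mem_edgeSet _ (hX.1 heX)
      obtain rfl := (hΓ.adj_root_iff i w).mp hi
      exact ⟨i, ⟨_, mem_filter.mpr ⟨heX, hi⟩⟩, rfl⟩
    · rintro ⟨i, hne, rfl⟩
      have hXi := (hΓ.isRootedSubtree_iff hG hX.1).mp hX i
      obtain ⟨e, he, hAe⟩ := hXi.exists_root_mem (coe_nonempty.mpr hne)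
      obtain ⟨w, rfl⟩ := Sym2.mem_iff_exists.mp hAe
      obtain rfl := (hΓ.adj_root_iff i w).mp (hXi.1 he)
      exact ⟨(mem_filter.mp he).1, Sym2.mem_mk_left _ _⟩
  rw [hroot, card_image_of_injective _ fun i j hij => hv (Sym2.congr_right.mp hij)]

theorem card_sub_card_filter_root_mem [DecidableEq V] [Fintype ι]
    (hΓ : IsBranchFamily G A v Γ) (hG : G.IsAcyclic) (hv : Function.Injective v)
    {X : Finset (Sym2 V)}
    (hX : IsRootedSubtree G A ↑X) :
    (Fintype.card ι : ℤ) - #(X.filter (A ∈ ·)) = #{i | X.filter (· ∈ (Γ i).edgeSet) = ∅} := by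
  have hsplit := card_filter_add_card_filter_not (s := (univ : Finset ι))
    (fun i => X.filter (· ∈ (Γ i).edgeSet) = ∅)
  simp only [← nonempty_iff_ne_empty, card_univ] at hsplit
  rw [hΓ.card_filter_root_mem hG hv hX, ← hsplit]
  push_cast
  ring

theorem rootedSign_eq_prod [DecidableEq V] [Fintype ι] (hΓ : IsBranchFamily G A v Γ)
    (hG : G.IsAcyclic) {F X : Finset (Sym2 V)} (hF : ↑F ⊆ G.edgeSet) (hX : ↑X ⊆ G.edgeSet) :
    rootedSign G A F X = ∏ i, rootedSign (Γ i) A (F.filter (· ∈ (Γ i).edgeSet))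
      (X.filter (· ∈ (Γ i).edgeSet)) := by
  simp only [rootedSign]
  rw [Fintype.prod_ite_zero, prod_pow_eq_pow_sum, hΓ.sum_card_filter hX]
  refine if_congr ?_ rfl rfl
  rw [hΓ.isRootedSubtree_iff hG hX, forall_and,
    subset_iff_forall_filter_subset _ fun e he => hΓ.exists_mem_edgeSet e (hF he)]

theorem ite_subset_mul_rootWeight_eq [Fintype ι] [DecidableEq V] (hΓ : IsBranchFamily G A v Γ)
    (hG : G.IsAcyclic) (hv : Function.Injective v)
    (hdeg : Nat.card {w : V | G.Adj A w} = Fintype.card ι) {F X : Finset (Sym2 V)}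
    (hne : F.Nonempty) :
    (if F ⊆ X then (-1) ^ (#X + #F) * rootWeight G A X else 0) =
      (-1) ^ #F * (#{i | X.filter (· ∈ (Γ i).edgeSet) = ∅} * rootedSign G A F X) := by
  rw [rootedSign]
  by_cases hc : IsRootedSubtree G A ↑X ∧ F ⊆ X
  · rw [if_pos hc.2, if_pos hc, rootWeight, if_pos ⟨hc.1, hne.mono hc.2⟩, hdeg,
      hΓ.card_sub_card_filter_root_mem hG hv hc.1]
    ring
  · rw [if_neg hc, mul_zero, mul_zero]
    exact ite_eq_right_iff.mpr fun hFX => by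
      rw [rootWeight, if_neg fun h => hc ⟨h.1, hFX⟩, mul_zero]

theorem mobiusRootWeight_eq_branchSum [Fintype V] [DecidableEq V] [Fintype ι] [DecidableEq ι]
    (hΓ : IsBranchFamily G A v Γ) (hG : G.IsAcyclic)
    (hv : Function.Injective v) (hdeg : Nat.card {w : V | G.Adj A w} = Fintype.card ι)
    {F : Finset (Sym2 V)} (hF : ↑F ⊆ G.edgeSet) (hne : F.Nonempty) :
    mobiusRootWeight G A F = branchSum Γ A F := by
  have hsupp : mobiusRootWeight G A F = ∑ X ∈ G.edgeFinset.powerset,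
      if F ⊆ X then (-1) ^ (#X + #F) * rootWeight G A X else 0 := by
    refine (sum_subset (subset_univ _) fun X _ hX => ite_eq_right_iff.mpr fun _ => ?_).symm
    rw [rootWeight, if_neg fun h => hX (mem_powerset.mpr fun e he => mem_edgeFinset.mpr
      (h.1.1 he)), mul_zero]
  have hρ : ∀ i, ∑ Y ∈ (G.edgeFinset.filter (· ∈ (Γ i).edgeSet)).powerset,
      rootedSign (Γ i) A (F.filter (· ∈ (Γ i).edgeSet)) Y =
        ∑ Y, rootedSign (Γ i) A (F.filter (· ∈ (Γ i).edgeSet)) Y := fun i => by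
    refine sum_subset (subset_univ _) fun Y _ hY => if_neg fun h => hY ?_
    exact mem_powerset.mpr fun e he =>
      mem_filter.mpr ⟨mem_edgeFinset.mpr (edgeSet_mono (hΓ.le i) (h.1.1 he)), h.1.1 he⟩
  rw [hsupp, branchSum, sum_congr rfl fun X hX => by
      rw [hΓ.ite_subset_mul_rootWeight_eq hG hv hdeg hne, hΓ.rootedSign_eq_prod hG hF
        fun e he => mem_edgeFinset.mp (mem_powerset.mp hX he)],
    ← mul_sum, sum_powerset_card_filter_eq_empty_mul_prod _ hΓ.eq_of_mem_edgeSet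
      fun e he => hΓ.exists_mem_edgeSet e (mem_edgeFinset.mp he)]
  congr 1
  refine sum_congr rfl fun i _ => ?_
  congr 1
  · simp [rootedSign, isRootedSubtree_empty]
  · exact prod_congr rfl fun j _ => hρ j

end IsBranchFamily

end Branches

theorem IsBranchFamily.cCoef_eq_branchSum {V : Type*} [Fintype V] [DecidableEq V]
    {G : SimpleGraph V} {A : V} {n : ℕ} {v : Fin n → V} {Γ : Fin n → SimpleGraph V}
    (hΓ : IsBranchFamily G A v Γ)
    {F : Finset (Sym2 V)} (hF : ↑F ⊆ G.edgeSet) :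
    cCoef n Γ A F = branchSum Γ A F := by
  simp only [cCoef, branchSum, sum_rootedSign]
  set I : Finset (Fin n) := univ.filter fun i => ∃ e ∈ F, e ∈ (Γ i).edgeSet
  set a : Fin n → ℤ := fun j => (-1) ^ #(F.filter (· ∈ (Γ j).edgeSet)) *
    zrel (Γ j) A (F.filter (· ∈ (Γ j).edgeSet)) + if F.filter (· ∈ (Γ j).edgeSet) = ∅ then 1 else 0
  have hI : ∀ i, F.filter (· ∈ (Γ i).edgeSet) = ∅ ↔ i ∈ Iᶜ := fun i => by
    simp [I, filter_eq_empty_iff]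
  have hcard : ∑ j ∈ I, #(F.filter (· ∈ (Γ j).edgeSet)) = #F := by
    rw [← hΓ.sum_card_filter hF]
    exact sum_subset (subset_univ I) fun j _ hj => by rw [(hI j).mpr (mem_compl.mpr hj), card_empty]
  have haI : ∏ j ∈ I, a j = (-1) ^ #F * ∏ j ∈ I, zrel (Γ j) A (F.filter (· ∈ (Γ j).edgeSet)) := by
    rw [← hcard, ← prod_pow_eq_pow_sum, ← prod_mul_distrib]
    refine prod_congr rfl fun j hj => ?_
    simp only [a]
    rw [if_neg fun h => mem_compl.mp ((hI j).mp h) hj, add_zero]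
  have haIc : ∀ j ∈ Iᶜ, a j = 1 + zrel (Γ j) A ∅ := fun j hj => by
    simp only [a, (hI j).mpr hj, card_empty, pow_zero, one_mul, if_true, add_comm]
  have hprod : ∀ i ∈ Iᶜ, ∏ j ∈ univ.erase i, a j =
      (∏ j ∈ I, a j) * ∏ j ∈ Iᶜ.erase i, (1 + zrel (Γ j) A ∅) := fun i hi => by
    rw [prod_univ_erase_eq_prod_mul_prod_compl_erase a (mem_compl.mp hi),
      prod_congr rfl fun j hj => haIc j (mem_of_mem_erase hj)]
  have hIc : #Iᶜ = n - #I := by rw [card_compl, Fintype.card_fin]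
  have hIn : #I ≤ n := by simpa using card_le_univ I
  calc _ = (∏ i ∈ I, zrel (Γ i) A (F.filter (· ∈ (Γ i).edgeSet))) *
        ∑ i ∈ Iᶜ, ∏ j ∈ Iᶜ.erase i, (1 + zrel (Γ j) A ∅) := by
          rw [sum_prod_erase_one_add, hIc, Nat.cast_sub hIn]
    _ = (-1) ^ #F * ∑ i ∈ Iᶜ, ∏ j ∈ univ.erase i, a j := by
          rw [sum_congr rfl hprod, ← mul_sum, haI, ← mul_assoc, ← mul_assoc, ← pow_add,
            Even.neg_one_pow ⟨_, rfl⟩, one_mul]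
    _ = _ := by
          simp_rw [ite_mul, one_mul, zero_mul]
          rw [← sum_filter]
          congr 2
          ext i
          simp only [mem_filter, mem_univ, true_and, hI]

open scoped Classical in
/-- let `G` be a finite tree, `A` a vertex of degree `n` with incident edges
`e i = s(A, v i)` (`i : Fin n`), and `Γ i` the branch at `e i`, i.e. the maximal subtree of `G`
containing `A` and the edge `e i` but none of the edges `e j`, `j ≠ i`.  For positive edge
weights `t` there is a constant `C` such that for all `T ≥ 0`,
`B(G, A, T) = Σ_{∅ ≠ F ⊆ E(G)} c_F · W((2 t_e)_{e ∈ F}; T) + C`. -/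
theorem Bcount_eq_sum_cCoef_mul_Wfin {V : Type*} [Fintype V] [DecidableEq V]
    (G : SimpleGraph V) (hG : G.IsTree) (A : V)
    (n : ℕ) (v : Fin n → V) (hv : Function.Injective v)
    (hadj : ∀ i, G.Adj A (v i))
    (hall : ∀ w : V, G.Adj A w → ∃ i, w = v i)
    (Γ : Fin n → SimpleGraph V)
    (hle : ∀ i, Γ i ≤ G)
    (hbranch : ∀ i, ∀ w : V, (Γ i).Adj A w ↔ w = v i)
    (hdisj : ∀ i j, i ≠ j → (Γ i).edgeSet ∩ (Γ j).edgeSet = ∅)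
    (hcover : ∀ e ∈ G.edgeSet, ∃ i, e ∈ (Γ i).edgeSet)
    (hconn : ∀ i, ∀ w ∈ (Γ i).support, (Γ i).Reachable A w)
    (t : Sym2 V → ℝ) (ht : ∀ e ∈ G.edgeSet, 0 < t e) :
    ∃ C : ℤ, ∀ T : ℝ, 0 ≤ T →
      Bcount G A t T =
        (∑ F : Finset (Sym2 V),
          if ↑F ⊆ G.edgeSet ∧ F.Nonempty then
            cCoef n Γ A F * (Wfin F t T : ℤ)
          else 0) + C := by
  have hΓ : IsBranchFamily G A v Γ := ⟨hle, hbranch, hdisj, hcover, hconn⟩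
  have hdeg : Nat.card {w : V | G.Adj A w} = Fintype.card (Fin n) := by
    rw [← Nat.card_eq_fintype_card, ← Nat.card_range_of_injective hv]
    congr
    exact Set.ext fun w => ⟨fun h => (hall w h).imp fun i hi => hi.symm,
      by rintro ⟨i, rfl⟩; exact hadj i⟩
  refine ⟨mobiusRootWeight G A ∅, fun T hT => ?_⟩
  rw [Bcount_eq_sum_mobiusRootWeight_mul_Wfin ht, ← add_sum_erase _ _ (mem_univ ∅),
    Wfin_eq_card_nonnegTuples, nonnegTuples_empty hT, Nat.card_unique, Nat.cast_one, mul_one,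
    add_comm, ← sum_erase univ (a := ∅) (f := fun F => if ↑F ⊆ G.edgeSet ∧ F.Nonempty then
      cCoef n Γ A F * (Wfin F t T : ℤ) else 0) (if_neg fun h => Finset.not_nonempty_empty h.2)]
  refine congrArg (· + _) (sum_congr rfl fun F hF => ?_)
  split_ifs with h
  · rw [hΓ.mobiusRootWeight_eq_branchSum hG.isAcyclic hv hdeg h.1 h.2, hΓ.cCoef_eq_branchSum h.1]
  · rw [mobiusRootWeight_eq_zero fun hFG => h ⟨hFG, nonempty_of_ne_empty (ne_of_mem_erase hF)⟩,
      zero_mul]
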